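/- Let m ≥ 4 and let W be an algebraic Weyl tensor on ℝ^m. Suppose the linear map sending a symmetric trace-free 2-index array P to the array (W*P)_{i₂…i_{m−2} j} = Σ_{l,k} W*_{l i₂…i_{m−2} k j} P_{lk} (where W*_{i₁…i_{m−2} j k} = Σ_{p,q} ε_{i₁…i_{m−2} p q} W_{pqjk}) is injective. Then every symmetric 2-index array Q that is Weyl compatible with W is a multiple of the metric: Q_{ij} = ((Σ_l Q_{ll})/m)·δ_{ij} for all i, j. -/

import Mathlib

/-- The Kronecker delta on `Fin m`, regarded as a real 2-index array. -/
def kdelta (m : ℕ) (i j : Fin m) : ℝ := if i = j then 1 else 0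

/-- An algebraic Weyl tensor on `ℝ^m`: a 4-index real array with the symmetries
`W_{ijkl} = −W_{jikl} = −W_{ijlk} = W_{klij}`, the first Bianchi identity, and which is
totally trace-free. -/
def IsWeylTensor (m : ℕ) (W : Fin m → Fin m → Fin m → Fin m → ℝ) : Prop :=
  (∀ i j k l, W j i k l = - W i j k l) ∧
  (∀ i j k l, W i j l k = - W i j k l) ∧
  (∀ i j k l, W k l i j = W i j k l) ∧
  (∀ i j k l, W i j k l + W i k l j + W i l j k = 0) ∧
  (∀ i j, ∑ k, W k i k j = 0)

/-- A 2-index array `P` is compatible with a 4-index array `K` if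
`Σ_l (K_{liks}P_{jl} + K_{lisj}P_{kl} + K_{lijk}P_{sl}) = 0` for all `i, j, k, s`. -/
def Compatible (m : ℕ) (K : Fin m → Fin m → Fin m → Fin m → ℝ)
    (P : Fin m → Fin m → ℝ) : Prop :=
  ∀ i j k s : Fin m,
    ∑ l, (K l i k s * P j l + K l i s j * P k l + K l i j k * P s l) = 0

/-- The Levi-Civita symbol on `Fin m`: the sign of the tuple regarded as a permutation
when all its entries are distinct, and `0` otherwise. -/
noncomputable def leviCivita (m : ℕ) (σ : Fin m → Fin m) : ℝ :=
  if h : Function.Bijective σ then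
    ((Equiv.Perm.sign (Equiv.ofBijective σ h) : ℤ) : ℝ)
  else 0

/-- The `m`-tuple `(i₁, …, i_{m−2}, p, q)` built from an `(m−2)`-tuple `I` and two
further indices `p`, `q`. -/
def extendTuple (m : ℕ) (I : Fin (m - 2) → Fin m) (p q : Fin m) (t : Fin m) : Fin m :=
  if ht : (t : ℕ) < m - 2 then I ⟨t, ht⟩ else if (t : ℕ) = m - 2 then p else q

/-- The array `W*_{i₁…i_{m−2} j k} = Σ_{p,q} ε_{i₁…i_{m−2} p q} W_{pqjk}`. -/
noncomputable def wstar (m : ℕ) (W : Fin m → Fin m → Fin m → Fin m → ℝ)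
    (I : Fin (m - 2) → Fin m) (j k : Fin m) : ℝ :=
  ∑ p, ∑ q, leviCivita m (extendTuple m I p q) * W p q j k

/-- The `(m−2)`-tuple `(l, i₂, …, i_{m−2})` built from an index `l` and an
`(m−3)`-tuple `J`. -/
def consTuple (m : ℕ) (l : Fin m) (J : Fin (m - 3) → Fin m) (t : Fin (m - 2)) : Fin m :=
  if ht : (t : ℕ) = 0 then l
  else J ⟨(t : ℕ) - 1, by have h := t.isLt; omega⟩

/-- The array `(W*P)_{i₂…i_{m−2} j} = Σ_{l,k} W*_{l i₂…i_{m−2} k j} P_{lk}`. -/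
noncomputable def wstarAction (m : ℕ) (W : Fin m → Fin m → Fin m → Fin m → ℝ)
    (P : Fin m → Fin m → ℝ) (J : Fin (m - 3) → Fin m) (j : Fin m) : ℝ :=
  ∑ l, ∑ k, wstar m W (consTuple m l J) k j * P l k

/-!
The shifted array `P = Q − (tr Q / m) δ` is symmetric, trace-free and still Weyl compatible,
because `δ` is compatible with any tensor satisfying the first Bianchi identity. By pair symmetry,
compatibility of `P` says that `Y_{abc} = Σ_k W_{bckj} P_{ak}` has vanishing cyclic sum in
`(a, b, c)`, while `(W*P)_{Jj} = Σ ε_{aJbc} Y_{abc}` with `ε` totally antisymmetric, hence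
cyclically invariant, in `(a, b, c)`. So `W*P = 0 = W*0`, and injectivity gives `P = 0`.
-/

theorem leviCivita_comp_swap (m : ℕ) (σ : Fin m → Fin m) {a b : Fin m} (hab : a ≠ b) :
    leviCivita m (σ ∘ Equiv.swap a b) = -leviCivita m σ := by
  by_cases hσ : Function.Bijective σ
  · have hσ' : Function.Bijective (σ ∘ Equiv.swap a b) := hσ.comp (Equiv.swap a b).bijective
    have : Equiv.ofBijective _ hσ' = Equiv.ofBijective σ hσ * Equiv.swap a b :=
      Equiv.ext fun _ ↦ rfl
    rw [leviCivita, leviCivita, dif_pos hσ', dif_pos hσ, this, map_mul,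
      Equiv.Perm.sign_swap hab]
    push_cast
    ring
  · have hσ' : ¬Function.Bijective (σ ∘ Equiv.swap a b) := fun h ↦
      hσ (by simpa [Function.comp_assoc] using h.comp (Equiv.swap a b).bijective)
    rw [leviCivita, leviCivita, dif_neg hσ', dif_neg hσ, neg_zero]

theorem extendTuple_swap (m : ℕ) (hm : 2 ≤ m) (I : Fin (m - 2) → Fin m) (p q : Fin m) :
    extendTuple m I q p =
      extendTuple m I p q ∘ Equiv.swap ⟨m - 2, by omega⟩ ⟨m - 1, by omega⟩ := by
  funext t
  rw [Function.comp_apply, Equiv.swap_apply_def]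
  split_ifs <;> simp only [extendTuple, Fin.ext_iff] at * <;> split_ifs <;> first | rfl | omega

theorem extendTuple_consTuple_swap (m : ℕ) (hm : 3 ≤ m) (J : Fin (m - 3) → Fin m)
    (l p q : Fin m) :
    extendTuple m (consTuple m p J) l q =
      extendTuple m (consTuple m l J) p q ∘ Equiv.swap ⟨0, by omega⟩ ⟨m - 2, by omega⟩ := by
  funext t
  rw [Function.comp_apply, Equiv.swap_apply_def]
  split_ifs <;> simp only [extendTuple, consTuple, Fin.ext_iff] at * <;> split_ifs <;>
    first | rfl | omega

/-- `ε_{a J b c}`: the Levi-Civita symbol with the middle `m − 3` slots fixed to `J`. -/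
noncomputable def leviCivitaTriple (m : ℕ) (J : Fin (m - 3) → Fin m) (a b c : Fin m) : ℝ :=
  leviCivita m (extendTuple m (consTuple m a J) b c)

theorem leviCivitaTriple_swap_right (m : ℕ) (hm : 2 ≤ m) (J : Fin (m - 3) → Fin m)
    (a b c : Fin m) :
    leviCivitaTriple m J a c b = -leviCivitaTriple m J a b c := by
  rw [leviCivitaTriple, extendTuple_swap m hm,
    leviCivita_comp_swap _ _ (by simp [Fin.ext_iff]; omega), leviCivitaTriple]

theorem leviCivitaTriple_swap_left (m : ℕ) (hm : 3 ≤ m) (J : Fin (m - 3) → Fin m)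
    (a b c : Fin m) :
    leviCivitaTriple m J b a c = -leviCivitaTriple m J a b c := by
  rw [leviCivitaTriple, extendTuple_consTuple_swap m hm,
    leviCivita_comp_swap _ _ (by simp [Fin.ext_iff]; omega), leviCivitaTriple]

theorem leviCivitaTriple_rotate (m : ℕ) (hm : 3 ≤ m) (J : Fin (m - 3) → Fin m)
    (a b c : Fin m) :
    leviCivitaTriple m J c a b = leviCivitaTriple m J a b c := by
  rw [leviCivitaTriple_swap_left m hm, leviCivitaTriple_swap_right m (by omega), neg_neg]

theorem sum_mul_eq_zero_of_cyclic {ι : Type*} [Fintype ι] (F Y : ι → ι → ι → ℝ)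
    (hF : ∀ a b c, F c a b = F a b c) (hY : ∀ a b c, Y a b c + Y b c a + Y c a b = 0) :
    ∑ a, ∑ b, ∑ c, F a b c * Y a b c = 0 := by
  have rotate (G : ι → ι → ι → ℝ) : ∑ a, ∑ b, ∑ c, G b c a = ∑ a, ∑ b, ∑ c, G a b c := by
    rw [Finset.sum_comm]
    exact Finset.sum_congr rfl fun _ _ ↦ Finset.sum_comm
  have hF₁ a b c : F c a b * Y a b c = F a b c * Y a b c := by rw [hF]
  have hF₂ a b c : F b c a * Y a b c = F a b c * Y a b c := by rw [← hF]
  have h₁ : ∑ a, ∑ b, ∑ c, F a b c * Y b c a = ∑ a, ∑ b, ∑ c, F a b c * Y a b c := by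
    rw [rotate fun a b c ↦ F c a b * Y a b c]
    simp only [hF₁]
  have h₂ : ∑ a, ∑ b, ∑ c, F a b c * Y c a b = ∑ a, ∑ b, ∑ c, F a b c * Y a b c := by
    rw [← rotate fun a b c ↦ F a b c * Y c a b]
    simp only [hF₂]
  have hsum : ∑ a, ∑ b, ∑ c, F a b c * (Y a b c + Y b c a + Y c a b) = 0 := by simp [hY]
  simp only [mul_add, Finset.sum_add_distrib, h₁, h₂] at hsum
  linarith

theorem Compatible.sub {m : ℕ} {K : Fin m → Fin m → Fin m → Fin m → ℝ}
    {P P' : Fin m → Fin m → ℝ}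
    (hP : Compatible m K P) (hP' : Compatible m K P') : Compatible m K (P - P') := by
  intro i j k s
  have h := congrArg₂ (· - ·) (hP i j k s) (hP' i j k s)
  simp only [← Finset.sum_sub_distrib, sub_zero] at h
  convert h using 2 with l
  simp only [Pi.sub_apply]
  ring

theorem Compatible.smul {m : ℕ} {K : Fin m → Fin m → Fin m → Fin m → ℝ} {P : Fin m → Fin m → ℝ}
    (hP : Compatible m K P) (c : ℝ) : Compatible m K (c • P) := by
  intro i j k s
  simp only [Pi.smul_apply, smul_eq_mul]
  rw [← mul_zero c, ← hP i j k s, Finset.mul_sum]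
  exact Finset.sum_congr rfl fun _ _ ↦ by ring

theorem compatible_kdelta {m : ℕ} {K : Fin m → Fin m → Fin m → Fin m → ℝ}
    (hanti : ∀ i j k l, K j i k l = -K i j k l)
    (hbianchi : ∀ i j k l, K i j k l + K i k l j + K i l j k = 0) :
    Compatible m K (kdelta m) := by
  intro i j k s
  simp only [kdelta, mul_ite, mul_one, mul_zero, Finset.sum_add_distrib, Finset.sum_ite_eq,
    Finset.mem_univ, if_true, hanti i]
  linear_combination -hbianchi i j k s

theorem Compatible.cyclic_sum_eq_zero {m : ℕ} {K : Fin m → Fin m → Fin m → Fin m → ℝ}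
    {P : Fin m → Fin m → ℝ} (hpair : ∀ i j k l, K k l i j = K i j k l) (hP : Compatible m K P)
    (j a b c : Fin m) :
    ∑ k, K b c k j * P a k + ∑ k, K c a k j * P b k + ∑ k, K a b k j * P c k = 0 := by
  simpa only [hpair _ j, ← Finset.sum_add_distrib] using hP j a b c

theorem wstarAction_eq_sum_leviCivitaTriple (m : ℕ) (W : Fin m → Fin m → Fin m → Fin m → ℝ)
    (P : Fin m → Fin m → ℝ) (J : Fin (m - 3) → Fin m) (j : Fin m) :
    wstarAction m W P J j =
      ∑ a, ∑ b, ∑ c, leviCivitaTriple m J a b c * ∑ k, W b c k j * P a k := by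
  simp only [wstarAction, wstar, leviCivitaTriple, Finset.sum_mul, Finset.mul_sum]
  refine Finset.sum_congr rfl fun a _ ↦ ?_
  rw [Finset.sum_comm]
  refine Finset.sum_congr rfl fun b _ ↦ ?_
  rw [Finset.sum_comm]
  exact Finset.sum_congr rfl fun c _ ↦ Finset.sum_congr rfl fun k _ ↦ by ring

theorem wstarAction_eq_zero_of_compatible (m : ℕ) (hm : 3 ≤ m)
    {W : Fin m → Fin m → Fin m → Fin m → ℝ} (hpair : ∀ i j k l, W k l i j = W i j k l)
    {P : Fin m → Fin m → ℝ} (hP : Compatible m W P) (J : Fin (m - 3) → Fin m) (j : Fin m) :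
    wstarAction m W P J j = 0 := by
  rw [wstarAction_eq_sum_leviCivitaTriple]
  exact sum_mul_eq_zero_of_cyclic _ (fun a b c ↦ ∑ k, W b c k j * P a k)
    (leviCivitaTriple_rotate m hm J) (hP.cyclic_sum_eq_zero hpair j)

/-- If the linear map `P ↦ W*P`, defined on symmetric trace-free 2-index arrays, is
injective, then every symmetric 2-index array `Q` that is Weyl compatible with `W` is a
multiple of the metric: `Q_{ij} = ((Σ_l Q_{ll})/m)·δ_{ij}`. -/
theorem weyl_compatible_is_multiple_of_metric_of_injective
    (m : ℕ) (hm : 4 ≤ m) (W : Fin m → Fin m → Fin m → Fin m → ℝ)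
    (hW : IsWeylTensor m W)
    (hinj : ∀ P P' : Fin m → Fin m → ℝ,
      (∀ i j, P i j = P j i) → (∑ i, P i i) = 0 →
      (∀ i j, P' i j = P' j i) → (∑ i, P' i i) = 0 →
      (∀ (J : Fin (m - 3) → Fin m) (j : Fin m),
        wstarAction m W P J j = wstarAction m W P' J j) → P = P')
    (Q : Fin m → Fin m → ℝ) (hQsymm : ∀ i j, Q i j = Q j i)
    (hQW : Compatible m W Q) :
    ∀ i j, Q i j = ((∑ l, Q l l) / (m : ℝ)) * kdelta m i j := by
  obtain ⟨hanti, -, hpair, hbianchi, -⟩ := hW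
  set c := (∑ l, Q l l) / (m : ℝ)
  set P := Q - c • kdelta m
  have hPsymm : ∀ i j, P i j = P j i := fun i j ↦ by
    simp only [P, Pi.sub_apply, Pi.smul_apply, kdelta, hQsymm i j, eq_comm]
  have hPtrace : ∑ i, P i i = 0 := by
    have : (m : ℝ) ≠ 0 := Nat.cast_ne_zero.mpr (by omega)
    simp only [P, c, Pi.sub_apply, Pi.smul_apply, kdelta, ↓reduceIte, smul_eq_mul, mul_one,
      Finset.sum_sub_distrib, Finset.sum_const, Finset.card_univ, Fintype.card_fin, nsmul_eq_mul]
    rw [mul_div_cancel₀ _ this, sub_self]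
  have hPW : Compatible m W P := hQW.sub ((compatible_kdelta hanti hbianchi).smul c)
  have hP : P = 0 := hinj P 0 hPsymm hPtrace (fun _ _ ↦ rfl) (by simp) fun J j ↦ by
    rw [wstarAction_eq_zero_of_compatible m (by omega) hpair hPW]
    simp [wstarAction]
  intro i j
  simpa [P, sub_eq_zero] using congrFun (congrFun hP i) j
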